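/- For every integer n ≥ 2, every real r ≥ 0, and every u ∈ ℤ², the sum of d(u,v)^{−r} over all v in B_u \ H_u is strictly less than the sum of d(u,v)^{−r} over all v ∈ H_u with v ≠ u. -/

import Mathlib

/-- Manhattan distance on the integer lattice ℤ². -/
def manhattan (u v : ℤ × ℤ) : ℤ := |u.1 - v.1| + |u.2 - v.2|

/-- The ball B_u : points v with 1 ≤ d(u,v) ≤ 2(n−1). -/
noncomputable def ball (n : ℤ) (u : ℤ × ℤ) : Finset (ℤ × ℤ) :=
  (Finset.Icc (u.1 - 2 * (n - 1)) (u.1 + 2 * (n - 1)) ×ˢ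
    Finset.Icc (u.2 - 2 * (n - 1)) (u.2 + 2 * (n - 1))).filter
    (fun v => 1 ≤ manhattan u v ∧ manhattan u v ≤ 2 * (n - 1))

/-- H_u : the (2n−1)×(2n−1) lattice centered at u. -/
noncomputable def centeredSquare (n : ℤ) (u : ℤ × ℤ) : Finset (ℤ × ℤ) :=
  Finset.Icc (u - (n - 1, n - 1)) (u + (n - 1, n - 1))

/-- The weight of a node v ≠ u: d(u,v)^{−r}. -/
noncomputable def wt (r : ℝ) (u v : ℤ × ℤ) : ℝ := (manhattan u v : ℝ) ^ (-r)

/-!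
Fold `B_u \ H_u` into `H_u \ {u}`: a point of the ball leaving the square through one side
is translated by `2n - 1` across the square in that coordinate. This map is injective and does
not increase the distance to `u`. As `d(u,v) ≤ 2(n-1)`, the folded coordinate of the image
still exceeds the other one in absolute value, so the image misses the diagonal point
`u + (1, 1)`. Because `d ↦ d^{-r}` is antitone for `r ≥ 0`, the weights of `B_u \ H_u` are thus
dominated termwise by those of a proper subset of `H_u \ {u}`.
-/

theorem Finset.sum_lt_sum_of_injOn {ι κ M : Type*} [AddCommMonoid M] [PartialOrder M]
    [IsOrderedCancelAddMonoid M] {s : Finset ι} {t : Finset κ} {e : ι → κ} {f : ι → M}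
    {g : κ → M} (he : Set.InjOn e s) (hst : Set.MapsTo e s t) (hfg : ∀ i ∈ s, f i ≤ g (e i))
    {j : κ} (hj : j ∈ t) (hje : ∀ i ∈ s, e i ≠ j) (hgj : 0 < g j) (hg : ∀ k ∈ t, 0 ≤ g k) :
    ∑ i ∈ s, f i < ∑ k ∈ t, g k := by
  classical
  calc ∑ i ∈ s, f i ≤ ∑ i ∈ s, g (e i) := Finset.sum_le_sum hfg
    _ = ∑ k ∈ s.image e, g k := (Finset.sum_image he).symm
    _ < ∑ k ∈ t, g k := by
      refine Finset.sum_lt_sum_of_subset (Finset.image_subset_iff.2 hst) hj ?_ hgj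
        fun k hk _ ↦ hg k hk
      simpa [Finset.mem_image] using hje

lemma mem_ball_sdiff_centeredSquare {n : ℤ} {u v : ℤ × ℤ} :
    v ∈ ball n u \ centeredSquare n u ↔
      1 ≤ manhattan u v ∧ manhattan u v ≤ 2 * (n - 1) ∧
        (n ≤ |u.1 - v.1| ∨ n ≤ |u.2 - v.2|) := by
  simp only [ball, centeredSquare, manhattan, Finset.mem_sdiff, Finset.mem_filter,
    Finset.mem_product, Finset.mem_Icc, Prod.le_def, Prod.fst_sub, Prod.snd_sub,
    Prod.fst_add, Prod.snd_add, Int.abs_eq_natAbs]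
  omega

lemma mem_centeredSquare_erase {n : ℤ} {u v : ℤ × ℤ} :
    v ∈ (centeredSquare n u).erase u ↔
      v ≠ u ∧ |u.1 - v.1| ≤ n - 1 ∧ |u.2 - v.2| ≤ n - 1 := by
  simp only [centeredSquare, Finset.mem_erase, Finset.mem_Icc, Prod.le_def, Prod.fst_sub,
    Prod.snd_sub, Prod.fst_add, Prod.snd_add, ne_eq, Prod.ext_iff, Int.abs_eq_natAbs]
  omega

lemma one_le_manhattan {u v : ℤ × ℤ} (h : v ≠ u) : 1 ≤ manhattan u v := by
  simp only [manhattan, Int.abs_eq_natAbs, ne_eq, Prod.ext_iff] at h ⊢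
  omega

lemma wt_pos (r : ℝ) {u v : ℤ × ℤ} (h : 1 ≤ manhattan u v) : 0 < wt r u v :=
  Real.rpow_pos_of_pos (by exact_mod_cast h) _

lemma wt_le_wt {r : ℝ} (hr : 0 ≤ r) {u v w : ℤ × ℤ} (hw : 1 ≤ manhattan u w)
    (hwv : manhattan u w ≤ manhattan u v) : wt r u v ≤ wt r u w :=
  Real.rpow_le_rpow_of_nonpos (by exact_mod_cast hw) (by exact_mod_cast hwv) (by linarith)

def fold (n : ℤ) (u v : ℤ × ℤ) : ℤ × ℤ :=
  if u.1 + n ≤ v.1 then (v.1 - (2 * n - 1), v.2)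
  else if v.1 ≤ u.1 - n then (v.1 + (2 * n - 1), v.2)
  else if u.2 + n ≤ v.2 then (v.1, v.2 - (2 * n - 1))
  else (v.1, v.2 + (2 * n - 1))

lemma fold_mem_centeredSquare_erase {n : ℤ} {u v : ℤ × ℤ}
    (hv : v ∈ ball n u \ centeredSquare n u) : fold n u v ∈ (centeredSquare n u).erase u := by
  rw [mem_ball_sdiff_centeredSquare] at hv
  rw [mem_centeredSquare_erase]
  simp only [manhattan, fold, Int.abs_eq_natAbs, ne_eq, Prod.ext_iff] at hv ⊢
  split_ifs <;> omega

lemma manhattan_fold_le {n : ℤ} {u v : ℤ × ℤ} (hv : v ∈ ball n u \ centeredSquare n u) :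
    manhattan u (fold n u v) ≤ manhattan u v := by
  rw [mem_ball_sdiff_centeredSquare] at hv
  simp only [manhattan, fold, Int.abs_eq_natAbs] at hv ⊢
  split_ifs <;> omega

lemma fold_ne_add_one_one {n : ℤ} {u v : ℤ × ℤ} (hv : v ∈ ball n u \ centeredSquare n u) :
    fold n u v ≠ (u.1 + 1, u.2 + 1) := by
  rw [mem_ball_sdiff_centeredSquare] at hv
  simp only [manhattan, fold, Int.abs_eq_natAbs, ne_eq, Prod.ext_iff] at hv ⊢
  split_ifs <;> omega

lemma fold_injOn (n : ℤ) (u : ℤ × ℤ) :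
    Set.InjOn (fold n u) (ball n u \ centeredSquare n u : Finset (ℤ × ℤ)) := by
  intro v hv v' hv' h
  rw [Finset.mem_coe, mem_ball_sdiff_centeredSquare] at hv hv'
  simp only [manhattan, fold, Int.abs_eq_natAbs, Prod.ext_iff] at hv hv' h ⊢
  split_ifs at h <;> omega

/-- The total weight of B_u \ H_u is strictly less than the total weight of H_u \ {u}. -/
theorem weight_ball_sdiff_lt_centeredSquare (n : ℤ) (hn : 2 ≤ n) (r : ℝ) (hr : 0 ≤ r)
    (u : ℤ × ℤ) :
    ∑ v ∈ ball n u \ centeredSquare n u, wt r u v <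
      ∑ v ∈ (centeredSquare n u).erase u, wt r u v := by
  have one_le {w : ℤ × ℤ} (hw : w ∈ (centeredSquare n u).erase u) : 1 ≤ manhattan u w :=
    one_le_manhattan (Finset.ne_of_mem_erase hw)
  have corner_mem : (u.1 + 1, u.2 + 1) ∈ (centeredSquare n u).erase u := by
    simp only [mem_centeredSquare_erase, ne_eq, Prod.ext_iff, Int.abs_eq_natAbs]
    omega
  exact Finset.sum_lt_sum_of_injOn (fold_injOn n u)
    (fun v hv ↦ fold_mem_centeredSquare_erase hv)
    (fun v hv ↦ wt_le_wt hr (one_le (fold_mem_centeredSquare_erase hv)) (manhattan_fold_le hv))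
    corner_mem (fun v hv ↦ fold_ne_add_one_one hv) (wt_pos r (one_le corner_mem))
    (fun w hw ↦ (wt_pos r (one_le hw)).le)
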